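/- arXiv:2603.26494 — 7 statements merged into one kernel-verified Lean document; each statement's English description precedes it below -/
import Mathlib

section
/- For all real θ₁, θ₂, θ₃, writing M(x) = Rotz(θ₃) * Roty(θ₂ + x) * Rotz(θ₁), it is not the case that both (i) (M(0).mulVec v) 2 = v 2 for every v : Fin 3 → ℝ, and (ii) (M(π/3).mulVec ![0,0,1]) 2 ≠ (M(−π/3).mulVec ![0,0,1]) 2. That is, the shared-parameter gate cannot simultaneously be distractor-invariant and assign distinct Z-coordinates to the two contexts starting from the north pole. -/
noncomputable def Rotz (α : ℝ) : Matrix (Fin 3) (Fin 3) ℝ :=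
  ![![Real.cos α, -Real.sin α, 0], ![Real.sin α, Real.cos α, 0], ![0, 0, 1]]

noncomputable def Roty (β : ℝ) : Matrix (Fin 3) (Fin 3) ℝ :=
  ![![Real.cos β, 0, Real.sin β], ![0, 1, 0], ![-Real.sin β, 0, Real.cos β]]

noncomputable def M (θ₁ θ₂ θ₃ x : ℝ) : Matrix (Fin 3) (Fin 3) ℝ :=
  Rotz θ₃ * Roty (θ₂ + x) * Rotz θ₁

/-!
The Z-rotations fix the north pole and the Z-coordinate, so the Z-coordinate of `M(x)` applied
to the north pole is `cos (θ₂ + x)`. Distractor invariance at the north pole forces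
`cos θ₂ = 1`, hence `sin θ₂ = 0`, and then `cos (θ₂ + π/3) - cos (θ₂ - π/3) = -2 sin θ₂ sin (π/3)`
vanishes: the two contexts cannot be told apart.
-/

open Matrix Real

lemma Rotz_mulVec_apply_two (α : ℝ) (v : Fin 3 → ℝ) : (Rotz α *ᵥ v) 2 = v 2 := by
  simp [Rotz, mulVec, dotProduct, Fin.sum_univ_succ]

lemma Rotz_mulVec_northPole (α : ℝ) : Rotz α *ᵥ ![0, 0, 1] = ![0, 0, 1] := by
  ext i
  fin_cases i <;> simp [Rotz, mulVec, dotProduct, Fin.sum_univ_succ]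

lemma Roty_mulVec_northPole_apply_two (β : ℝ) : (Roty β *ᵥ ![0, 0, 1]) 2 = cos β := by
  simp [Roty, mulVec, dotProduct, Fin.sum_univ_succ]

lemma M_mulVec_northPole_apply_two (θ₁ θ₂ θ₃ x : ℝ) :
    (M θ₁ θ₂ θ₃ x *ᵥ ![0, 0, 1]) 2 = cos (θ₂ + x) := by
  rw [M, ← mulVec_mulVec, ← mulVec_mulVec, Rotz_mulVec_apply_two, Rotz_mulVec_northPole,
    Roty_mulVec_northPole_apply_two]

theorem stmt3 (θ₁ θ₂ θ₃ : ℝ) :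
    ¬ ((∀ v : Fin 3 → ℝ, ((M θ₁ θ₂ θ₃ 0).mulVec v) 2 = v 2) ∧
       ((M θ₁ θ₂ θ₃ (Real.pi / 3)).mulVec ![0, 0, 1]) 2 ≠
         ((M θ₁ θ₂ θ₃ (-(Real.pi / 3))).mulVec ![0, 0, 1]) 2) := by
  rintro ⟨hinvariant, hdistinct⟩
  have hcos : cos θ₂ = 1 := by
    simpa [M_mulVec_northPole_apply_two] using hinvariant ![0, 0, 1]
  have hsin : sin θ₂ = 0 := by
    nlinarith [sin_sq_add_cos_sq θ₂]
  apply hdistinct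
  rw [M_mulVec_northPole_apply_two, M_mulVec_northPole_apply_two, ← sub_eq_add_neg, cos_add,
    cos_sub, hsin]
  ring
end

section
/- For all U, V in SU(2), π(U * V) = π(U) * π(V); that is, the map π is a homomorphism from SU(2) into 3×3 real matrices. -/
open Matrix Complex
noncomputable def sigma : Fin 3 → Matrix (Fin 2) (Fin 2) ℂ :=
  ![!![0, 1; 1, 0], !![0, -Complex.I; Complex.I, 0], !![1, 0; 0, -1]]

lemma sigma_herm (i : Fin 3) : (sigma i)ᴴ = sigma i := by
  fin_cases i <;> ext a b <;> fin_cases a <;> fin_cases b <;>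
    simp [sigma, conjTranspose_apply]

lemma trace_sigma (i : Fin 3) : Matrix.trace (sigma i) = 0 := by
  fin_cases i <;> simp [sigma, Matrix.trace_fin_two]

lemma pauli_expand (M : Matrix (Fin 2) (Fin 2) ℂ) (h : Matrix.trace M = 0) :
    M = ∑ k : Fin 3, (((1:ℂ)/2) * Matrix.trace (sigma k * M)) • sigma k := by
  rw [Matrix.trace_fin_two] at h
  have hr := congrArg Complex.re h
  have hi := congrArg Complex.im h
  simp at hr hi
  ext a b
  fin_cases a <;> fin_cases b <;>
    simp [sigma, Fin.sum_univ_three, Matrix.trace_fin_two, Matrix.mul_apply,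
      Fin.sum_univ_two] <;> ring_nf <;>
    simp [Complex.ext_iff] <;> constructor <;> linarith

lemma trace_real (i k : Fin 3) (W : Matrix (Fin 2) (Fin 2) ℂ) :
    (Matrix.trace (sigma i * W * sigma k * Wᴴ)).im = 0 := by
  have h1 : star (Matrix.trace (sigma i * W * sigma k * Wᴴ)) =
      Matrix.trace ((sigma i * W * sigma k * Wᴴ)ᴴ) := (Matrix.trace_conjTranspose _).symm
  have h2 : (sigma i * W * sigma k * Wᴴ)ᴴ = W * sigma k * Wᴴ * sigma i := by
    simp [Matrix.conjTranspose_mul, sigma_herm, Matrix.mul_assoc]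
  have h3 : Matrix.trace (W * sigma k * Wᴴ * sigma i) =
      Matrix.trace (sigma i * W * sigma k * Wᴴ) := by
    rw [Matrix.trace_mul_comm]
    simp [Matrix.mul_assoc]
  have : star (Matrix.trace (sigma i * W * sigma k * Wᴴ)) =
      Matrix.trace (sigma i * W * sigma k * Wᴴ) := by rw [h1, h2, h3]
  have := congrArg Complex.im this
  simp at this
  linarith

abbrev SU2 := Matrix.specialUnitaryGroup (Fin 2) ℂ

noncomputable def piMap (U : Matrix (Fin 2) (Fin 2) ℂ) : Matrix (Fin 3) (Fin 3) ℝ :=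
  Matrix.of fun i j => (((1 : ℂ) / 2) * Matrix.trace (sigma i * U * sigma j * Uᴴ)).re

theorem stmt9 (U V : SU2) :
    piMap ((U * V : SU2) : Matrix (Fin 2) (Fin 2) ℂ) =
      piMap (U : Matrix (Fin 2) (Fin 2) ℂ) * piMap (V : Matrix (Fin 2) (Fin 2) ℂ) := by
  have hV : (V : Matrix (Fin 2) (Fin 2) ℂ)ᴴ * V = 1 := by
    have := V.2
    rw [Matrix.mem_specialUnitaryGroup_iff] at this
    exact this.1.1
  ext i j
  set A := (U : Matrix (Fin 2) (Fin 2) ℂ)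
  set B := (V : Matrix (Fin 2) (Fin 2) ℂ)
  set M := B * sigma j * Bᴴ with hM
  have htr : Matrix.trace M = 0 := by
    rw [hM, Matrix.trace_mul_comm, ← Matrix.mul_assoc, hV, Matrix.one_mul, trace_sigma]
  have hexp := pauli_expand M htr
  have key : sigma i * (A * B) * sigma j * (A * B)ᴴ =
      ∑ k : Fin 3, (((1:ℂ)/2) * Matrix.trace (sigma k * M)) • (sigma i * A * sigma k * Aᴴ) := by
    have : sigma i * (A * B) * sigma j * (A * B)ᴴ = sigma i * A * M * Aᴴ := by
      rw [hM]; simp [Matrix.conjTranspose_mul, Matrix.mul_assoc]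
    rw [this]; conv_lhs => rw [hexp]
    rw [Matrix.mul_sum, Matrix.sum_mul]
    congr 1; ext k
    simp [Matrix.mul_smul, Matrix.smul_mul, Matrix.mul_assoc]
  show (((1:ℂ)/2) * Matrix.trace (sigma i * (A * B) * sigma j * (A * B)ᴴ)).re = _
  rw [key, Matrix.trace_sum]
  simp only [Matrix.trace_smul, smul_eq_mul, Finset.mul_sum]
  rw [Complex.re_sum]
  show _ = ∑ k : Fin 3, piMap A i k * piMap B k j
  congr 1; ext k
  have h1 : (Matrix.trace (sigma i * A * sigma k * Aᴴ)).im = 0 := trace_real i k A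
  have h2 : (Matrix.trace (sigma k * B * sigma j * Bᴴ)).im = 0 := trace_real k j B
  have hMk : Matrix.trace (sigma k * M) = Matrix.trace (sigma k * B * sigma j * Bᴴ) := by
    rw [hM]; simp [Matrix.mul_assoc]
  rw [hMk]
  simp only [piMap, Matrix.of_apply]
  set t1 := Matrix.trace (sigma i * A * sigma k * Aᴴ)
  set t2 := Matrix.trace (sigma k * B * sigma j * Bᴴ)
  simp [Complex.mul_re, Complex.mul_im, h1, h2]
  ring
end

section
/- For every U in SU(2), the matrix π(U) is orthogonal: (π(U))ᵀ * π(U) = 1 (the 3×3 identity matrix). -/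
open Matrix Complex

lemma pi_eq (a b : ℂ) :
    piMap !![a, b; -(starRingEnd ℂ) b, (starRingEnd ℂ) a] =
      !![a.re^2 - a.im^2 - b.re^2 + b.im^2, 2*b.re*b.im + 2*a.re*a.im,
           2*a.im*b.im - 2*a.re*b.re;
         2*b.re*b.im - 2*a.re*a.im, a.re^2 - a.im^2 + b.re^2 - b.im^2,
           2*a.im*b.re + 2*a.re*b.im;
         2*a.im*b.im + 2*a.re*b.re, 2*a.im*b.re - 2*a.re*b.im,
           a.re^2 + a.im^2 - b.re^2 - b.im^2] := by
  have hH : (!![a, b; -(starRingEnd ℂ) b, (starRingEnd ℂ) a])ᴴ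
      = !![(starRingEnd ℂ) a, -b; (starRingEnd ℂ) b, a] := by
    ext i j; fin_cases i <;> fin_cases j <;> simp
  ext i j
  fin_cases i <;> fin_cases j <;>
  · rw [piMap]
    simp only [Matrix.of_apply, sigma, hH, Matrix.cons_val_zero, Matrix.cons_val_one,
      Matrix.head_cons, Matrix.mul_fin_two, Matrix.trace_fin_two_of]
    simp [Complex.ext_iff, Complex.mul_re, Complex.mul_im]
    ring

lemma pi_orth (a b : ℂ) (hnorm : a.re^2 + a.im^2 + b.re^2 + b.im^2 = 1) :
    (piMap !![a, b; -(starRingEnd ℂ) b, (starRingEnd ℂ) a])ᵀ *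
      piMap !![a, b; -(starRingEnd ℂ) b, (starRingEnd ℂ) a] = 1 := by
  rw [pi_eq]
  ext i j
  fin_cases i <;> fin_cases j <;>
  · simp only [Matrix.mul_apply, Matrix.transpose_apply, Fin.sum_univ_three]
    simp [Matrix.one_apply]
    first
    | ring1
    | linear_combination (a.re^2 + a.im^2 + b.re^2 + b.im^2 + 1) * hnorm
    | linear_combination (-(a.re^2 + a.im^2 + b.re^2 + b.im^2 + 1)) * hnorm

theorem stmt10 (U : SU2) :
    (piMap (U : Matrix (Fin 2) (Fin 2) ℂ))ᵀ * piMap (U : Matrix (Fin 2) (Fin 2) ℂ) = 1 := by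
  obtain ⟨M, hM⟩ := U
  rw [Matrix.mem_specialUnitaryGroup_iff] at hM
  obtain ⟨hu, hdet⟩ := hM
  rw [Matrix.mem_unitaryGroup_iff] at hu
  have hinv : M⁻¹ = Mᴴ := Matrix.inv_eq_right_inv hu
  have hadj : Mᴴ = M.adjugate := by
    rw [← hinv, Matrix.inv_def, hdet, Ring.inverse_one, one_smul]
  have h10 : M 1 0 = -(starRingEnd ℂ) (M 0 1) := by
    have := congrFun (congrFun hadj 0) 1
    rw [Matrix.adjugate_fin_two] at this
    simp only [Matrix.conjTranspose_apply, Matrix.cons_val_one, Matrix.cons_val_zero,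
      Matrix.head_cons] at this
    have := congrArg (starRingEnd ℂ) this
    simpa using this
  have h11 : M 1 1 = (starRingEnd ℂ) (M 0 0) := by
    have := congrFun (congrFun hadj 0) 0
    rw [Matrix.adjugate_fin_two] at this
    simp only [Matrix.conjTranspose_apply, Matrix.cons_val_one, Matrix.cons_val_zero,
      Matrix.head_cons] at this
    exact this.symm
  have hMeq : M = !![M 0 0, M 0 1; -(starRingEnd ℂ) (M 0 1), (starRingEnd ℂ) (M 0 0)] := by
    conv_lhs => rw [Matrix.eta_fin_two M]
    rw [h10, h11]
  have hnorm : (M 0 0).re^2 + (M 0 0).im^2 + (M 0 1).re^2 + (M 0 1).im^2 = 1 := by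
    rw [hMeq, Matrix.det_fin_two_of] at hdet
    have := congrArg Complex.re hdet
    simp [Complex.mul_re] at this
    nlinarith [this]
  show (piMap M)ᵀ * piMap M = 1
  rw [hMeq]
  exact pi_orth _ _ hnorm
end

section
/- For every U in SU(2), Matrix.det (π(U)) = 1; hence π maps SU(2) into the special orthogonal group SO(3). -/
/-!
An element of SU(2) has the form `!![a, b; -star b, star a]` with `|a|² + |b|² = 1`, because its
adjugate is its inverse `Uᴴ`. Writing `π(U)` out in the real and imaginary parts of `a` and `b`,
a direct computation gives `det π(U) = (|a|² + |b|²)³`.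
-/

open Matrix Complex

namespace Matrix

variable {R : Type*} [CommRing R] [StarRing R]

theorem adjugate_eq_conjTranspose_of_mem_specialUnitaryGroup {n : Type*} [Fintype n]
    [DecidableEq n] {U : Matrix n n R} (hU : U ∈ specialUnitaryGroup n R) :
    U.adjugate = Uᴴ := by
  rw [mem_specialUnitaryGroup_iff] at hU
  refine (left_inv_eq_right_inv (mem_unitaryGroup_iff'.mp hU.1) ?_).symm
  rw [mul_adjugate, hU.2, one_smul]

theorem exists_eq_of_mem_specialUnitaryGroup_fin_two {U : Matrix (Fin 2) (Fin 2) R}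
    (hU : U ∈ specialUnitaryGroup (Fin 2) R) :
    ∃ a b : R, U = !![a, b; -star b, star a] ∧ a * star a + b * star b = 1 := by
  have hadj := congrFun₂ (adjugate_eq_conjTranspose_of_mem_specialUnitaryGroup hU)
  have h11 : U 1 1 = star (U 0 0) := by simpa [adjugate_fin_two] using hadj 0 0
  have h10 : U 1 0 = -star (U 0 1) := by
    simpa [adjugate_fin_two, neg_eq_iff_eq_neg] using hadj 1 0
  have hU' : U = !![U 0 0, U 0 1; -star (U 0 1), star (U 0 0)] := by
    rw [← h11, ← h10]; exact eta_fin_two U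
  refine ⟨U 0 0, U 0 1, hU', ?_⟩
  have hdet := (mem_specialUnitaryGroup_iff.mp hU).2
  rw [hU', det_fin_two_of] at hdet
  linear_combination hdet

end Matrix

theorem piMap_fin_two_of (a b : ℂ) :
    piMap !![a, b; -star b, star a] =
      !![a.re ^ 2 - a.im ^ 2 - b.re ^ 2 + b.im ^ 2, 2 * b.re * b.im + 2 * a.re * a.im,
          2 * a.im * b.im - 2 * a.re * b.re;
        2 * b.re * b.im - 2 * a.re * a.im, a.re ^ 2 - a.im ^ 2 + b.re ^ 2 - b.im ^ 2,
          2 * a.im * b.re + 2 * a.re * b.im;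
        2 * a.im * b.im + 2 * a.re * b.re, 2 * a.im * b.re - 2 * a.re * b.im,
          a.re ^ 2 + a.im ^ 2 - b.re ^ 2 - b.im ^ 2] := by
  ext i j
  fin_cases i <;> fin_cases j <;>
    simp [piMap, sigma, trace_fin_two, mul_apply, conjTranspose_apply, mul_re, mul_im] <;> ring

theorem det_piMap_fin_two_of (a b : ℂ) :
    (piMap !![a, b; -star b, star a]).det = (normSq a + normSq b) ^ 3 := by
  rw [piMap_fin_two_of, det_fin_three]
  simp only [Fin.isValue, of_apply, cons_val', cons_val_zero, cons_val_fin_one, cons_val_one,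
    cons_val, normSq_apply]
  ring

theorem stmt11 (U : SU2) :
    Matrix.det (piMap (U : Matrix (Fin 2) (Fin 2) ℂ)) = 1 := by
  obtain ⟨a, b, hU, hab⟩ := exists_eq_of_mem_specialUnitaryGroup_fin_two U.2
  have hnorm : normSq a + normSq b = 1 := by
    simpa only [RCLike.star_def, mul_conj, ← ofReal_add, ofReal_eq_one] using hab
  rw [hU, det_piMap_fin_two_of, hnorm, one_pow]
end

section
/- For every U in SU(2), π(U) = 1 (the 3×3 identity matrix) if and only if the underlying matrix of U equals the 2×2 identity or its negation; that is, the kernel of π is {I, −I}. -/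
open Matrix Complex

lemma piMap_one : piMap (1 : Matrix (Fin 2) (Fin 2) ℂ) = 1 := by
  ext i j
  fin_cases i <;> fin_cases j <;>
    simp [piMap, sigma, Matrix.trace, Matrix.mul_apply, Fin.sum_univ_two, Matrix.one_apply] <;>
    norm_num

lemma piMap_neg_one : piMap (-1 : Matrix (Fin 2) (Fin 2) ℂ) = 1 := by
  ext i j
  fin_cases i <;> fin_cases j <;>
    simp [piMap, sigma, Matrix.trace, Matrix.mul_apply, Fin.sum_univ_two, Matrix.one_apply,
      Matrix.neg_apply] <;>
    norm_num

lemma piMap_forward (U : SU2) (h : piMap (U : Matrix (Fin 2) (Fin 2) ℂ) = 1) :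
    (U : Matrix (Fin 2) (Fin 2) ℂ) = 1 ∨ (U : Matrix (Fin 2) (Fin 2) ℂ) = -1 := by
  obtain ⟨hu, hdet⟩ := Matrix.mem_specialUnitaryGroup_iff.mp U.2
  have hstar : star (U : Matrix (Fin 2) (Fin 2) ℂ) * U = 1 :=
    (Matrix.mem_unitaryGroup_iff'.mp hu)
  have e00 := congrFun (congrFun hstar 0) 0
  have e11 := congrFun (congrFun hstar 1) 1
  have h22 := congrFun (congrFun h 2) 2
  have h00 := congrFun (congrFun h 0) 0
  rw [Matrix.det_fin_two] at hdet
  simp [Matrix.mul_apply, Fin.sum_univ_two, Matrix.one_apply, piMap, sigma,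
    Matrix.trace, Matrix.conjTranspose_apply, Complex.ext_iff] at e00 e11 h22 h00 hdet
  set ar := ((U : Matrix (Fin 2) (Fin 2) ℂ) 0 0).re with har
  set ai := ((U : Matrix (Fin 2) (Fin 2) ℂ) 0 0).im with hai
  set br := ((U : Matrix (Fin 2) (Fin 2) ℂ) 0 1).re with hbr
  set bi := ((U : Matrix (Fin 2) (Fin 2) ℂ) 0 1).im with hbi
  set cr := ((U : Matrix (Fin 2) (Fin 2) ℂ) 1 0).re with hcr
  set ci := ((U : Matrix (Fin 2) (Fin 2) ℂ) 1 0).im with hci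
  set dr := ((U : Matrix (Fin 2) (Fin 2) ℂ) 1 1).re with hdr
  set di := ((U : Matrix (Fin 2) (Fin 2) ℂ) 1 1).im with hdi
  clear_value ar ai br bi cr ci dr di
  clear h hu hstar
  obtain ⟨e1, -⟩ := e00
  obtain ⟨e2, -⟩ := e11
  obtain ⟨d1, d2⟩ := hdet
  have key : br * br + bi * bi + cr * cr + ci * ci = 0 := by
    linear_combination e1 / 2 + e2 / 2 - h22
  have hbr0 : br = 0 := by
    have : br * br = 0 := by linarith [key, mul_self_nonneg br, mul_self_nonneg bi, mul_self_nonneg cr, mul_self_nonneg ci]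
    exact mul_self_eq_zero.mp this
  have hbi0 : bi = 0 := by
    have : bi * bi = 0 := by linarith [key, mul_self_nonneg br, mul_self_nonneg bi, mul_self_nonneg cr, mul_self_nonneg ci]
    exact mul_self_eq_zero.mp this
  have hcr0 : cr = 0 := by
    have : cr * cr = 0 := by linarith [key, mul_self_nonneg br, mul_self_nonneg bi, mul_self_nonneg cr, mul_self_nonneg ci]
    exact mul_self_eq_zero.mp this
  have hci0 : ci = 0 := by
    have : ci * ci = 0 := by linarith [key, mul_self_nonneg br, mul_self_nonneg bi, mul_self_nonneg cr, mul_self_nonneg ci]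
    exact mul_self_eq_zero.mp this
  simp only [hbr0, hbi0, hcr0, hci0] at d1 d2 h00 e1 e2
  ring_nf at d1 d2 h00 e1 e2
  -- now: d1 : ar*dr - ai*di = 1, d2 : ar*di + ai*dr = 0, h00 gives ar*dr+ai*di = 1
  have E3 : ar * dr + ai * di = 1 := by linarith [h00]
  have h5 : ai * di = 0 := by linarith
  have h6 : ar * dr = 1 := by linarith
  have k1 : ai + ar * ar * di = 0 := by linear_combination ar * d2 - ai * h6
  have k2 : ai * ai = 0 := by linear_combination ai * k1 - ar * ar * h5
  have hai0 : ai = 0 := mul_self_eq_zero.mp k2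
  have m1 : ar * ar * di = 0 := by linear_combination k1 - hai0
  have hdi0 : di = 0 := by linear_combination dr * dr * m1 - di * (1 + ar * dr) * h6
  have e1' : ar * ar = 1 := by
    rw [hai0] at e1; linarith [e1]
  have hdra : dr = ar := by linear_combination -dr * e1' + ar * h6
  have : (ar - 1) * (ar + 1) = 0 := by linear_combination e1'
  rcases mul_eq_zero.mp this with hx | hx
  · left
    ext i j
    fin_cases i <;> fin_cases j <;>
      simp [Matrix.one_apply, Complex.ext_iff, ← har, ← hai, ← hbr, ← hbi, ← hcr, ← hci,
        ← hdr, ← hdi] <;>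
      constructor <;> linarith
  · right
    ext i j
    fin_cases i <;> fin_cases j <;>
      simp [Matrix.one_apply, Complex.ext_iff, ← har, ← hai, ← hbr, ← hbi, ← hcr, ← hci,
        ← hdr, ← hdi] <;>
      constructor <;> linarith

theorem stmt12 (U : SU2) :
    piMap (U : Matrix (Fin 2) (Fin 2) ℂ) = 1 ↔
      (U : Matrix (Fin 2) (Fin 2) ℂ) = 1 ∨ (U : Matrix (Fin 2) (Fin 2) ℂ) = -1 := by
  constructor
  · exact piMap_forward U
  · rintro (h | h) <;> rw [h]
    · exact piMap_one
    · exact piMap_neg_one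
end

section
/- For all U, V in SU(2), π(U) = π(V) if and only if the underlying matrix of U equals that of V or its negation; that is, π is exactly 2-to-1. -/
open Matrix Complex

private lemma sq0 (p q r s : ℝ) (h : p^2+q^2+r^2+s^2 = 0) : p = 0 := by
  have h1 : p^2 = 0 := le_antisymm
    (by linarith [sq_nonneg q, sq_nonneg r, sq_nonneg s]) (sq_nonneg p)
  exact pow_eq_zero_iff two_ne_zero |>.mp h1

private lemma key (x y z w x' y' z' w' : ℝ)
    (hn : x^2+y^2+z^2+w^2 = 1) (hn' : x'^2+y'^2+z'^2+w'^2 = 1)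
    (H00 : x^2-y^2-z^2+w^2 = x'^2-y'^2-z'^2+w'^2)
    (H01 : 2*x*y+2*z*w = 2*x'*y'+2*z'*w')
    (H02 : -2*x*z+2*y*w = -2*x'*z'+2*y'*w')
    (H10 : -2*x*y+2*z*w = -2*x'*y'+2*z'*w')
    (H11 : x^2-y^2+z^2-w^2 = x'^2-y'^2+z'^2-w'^2)
    (H12 : 2*x*w+2*y*z = 2*x'*w'+2*y'*z')
    (H20 : 2*x*z+2*y*w = 2*x'*z'+2*y'*w')
    (H21 : -2*x*w+2*y*z = -2*x'*w'+2*y'*z')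
    (H22 : x^2+y^2-z^2-w^2 = x'^2+y'^2-z'^2-w'^2) :
    (x = x' ∧ y = y' ∧ z = z' ∧ w = w') ∨ (x = -x' ∧ y = -y' ∧ z = -z' ∧ w = -w') := by
  have Pxy : x*y = x'*y' := by linear_combination H01/4 - H10/4
  have Pzw : z*w = z'*w' := by linear_combination H01/4 + H10/4
  have Pxz : x*z = x'*z' := by linear_combination H20/4 - H02/4
  have Pyw : y*w = y'*w' := by linear_combination H02/4 + H20/4
  have Pxw : x*w = x'*w' := by linear_combination H12/4 - H21/4
  have Pyz : y*z = y'*z' := by linear_combination H12/4 + H21/4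
  have Pxx : x*x = x'*x' := by linear_combination H00/4 + H11/4 + H22/4 + hn/4 - hn'/4
  have Pyy : y*y = y'*y' := by linear_combination H22/4 - H00/4 - H11/4 + hn/4 - hn'/4
  have Pzz : z*z = z'*z' := by linear_combination H11/4 - H00/4 - H22/4 + hn/4 - hn'/4
  have Pww : w*w = w'*w' := by linear_combination H00/4 - H11/4 - H22/4 + hn/4 - hn'/4
  have hs : (x*x'+y*y'+z*z'+w*w')^2 = 1 := by
    linear_combination x'^2*Pxx + y'^2*Pyy + z'^2*Pzz + w'^2*Pww
      + 2*x'*y'*Pxy + 2*x'*z'*Pxz + 2*x'*w'*Pxw + 2*y'*z'*Pyz + 2*y'*w'*Pyw + 2*z'*w'*Pzw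
      + (x'^2+y'^2+z'^2+w'^2+1)*hn'
  have hcases : (x*x'+y*y'+z*z'+w*w' - 1) * (x*x'+y*y'+z*z'+w*w' + 1) = 0 := by
    linear_combination hs
  rcases mul_eq_zero.mp hcases with h | h
  · left
    have hz : (x-x')^2+(y-y')^2+(z-z')^2+(w-w')^2 = 0 := by linear_combination hn + hn' - 2*h
    exact ⟨sub_eq_zero.mp (sq0 (x-x') (y-y') (z-z') (w-w') hz),
      sub_eq_zero.mp (sq0 (y-y') (x-x') (z-z') (w-w') (by linear_combination hz)),
      sub_eq_zero.mp (sq0 (z-z') (x-x') (y-y') (w-w') (by linear_combination hz)),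
      sub_eq_zero.mp (sq0 (w-w') (x-x') (y-y') (z-z') (by linear_combination hz))⟩
  · right
    have hz : (x+x')^2+(y+y')^2+(z+z')^2+(w+w')^2 = 0 := by linear_combination hn + hn' + 2*h
    have e : ∀ p q : ℝ, p + q = 0 → p = -q := fun p q hpq => by linarith
    exact ⟨e _ _ (sq0 (x+x') (y+y') (z+z') (w+w') hz),
      e _ _ (sq0 (y+y') (x+x') (z+z') (w+w') (by linear_combination hz)),
      e _ _ (sq0 (z+z') (x+x') (y+y') (w+w') (by linear_combination hz)),
      e _ _ (sq0 (w+w') (x+x') (y+y') (z+z') (by linear_combination hz))⟩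

private lemma piMap_form (a b : ℂ) :
    piMap !![a, b; -star b, star a] =
      !![a.re^2-a.im^2-b.re^2+b.im^2, 2*a.re*a.im+2*b.re*b.im, -2*a.re*b.re+2*a.im*b.im;
         -2*a.re*a.im+2*b.re*b.im, a.re^2-a.im^2+b.re^2-b.im^2, 2*a.re*b.im+2*a.im*b.re;
         2*a.re*b.re+2*a.im*b.im, -2*a.re*b.im+2*a.im*b.re, a.re^2+a.im^2-b.re^2-b.im^2] := by
  ext i j
  fin_cases i <;> fin_cases j <;>
    · simp [piMap, sigma, Matrix.trace, Matrix.mul_apply, Fin.sum_univ_succ,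
        Matrix.conjTranspose_apply]
      ring

private lemma su2_form (U : Matrix (Fin 2) (Fin 2) ℂ)
    (hU : U ∈ Matrix.specialUnitaryGroup (Fin 2) ℂ) :
    U = !![U 0 0, U 0 1; -star (U 0 1), star (U 0 0)] := by
  obtain ⟨hu, hdet⟩ := Matrix.mem_specialUnitaryGroup_iff.mp hU
  have h1 : Uᴴ * U = 1 := Matrix.mem_unitaryGroup_iff'.mp hu
  have h2 : U * U.adjugate = 1 := by
    rw [Matrix.mul_adjugate, hdet, one_smul]
  have h3 : Uᴴ = U.adjugate := by
    calc Uᴴ = Uᴴ * (U * U.adjugate) := by rw [h2, mul_one]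
    _ = (Uᴴ * U) * U.adjugate := by rw [mul_assoc]
    _ = U.adjugate := by rw [h1, one_mul]
  rw [Matrix.adjugate_fin_two] at h3
  have e1 : U 1 1 = star (U 0 0) := by
    have := congrFun (congrFun h3 0) 0
    simp [Matrix.conjTranspose_apply] at this
    rw [Complex.star_def]
    exact this.symm
  have e2 : U 1 0 = -star (U 0 1) := by
    have := congrFun (congrFun h3 1) 0
    simp [Matrix.conjTranspose_apply] at this
    rw [Complex.star_def]
    linear_combination this
  ext i j
  fin_cases i <;> fin_cases j <;> simp [e1, e2]

theorem stmt13 (U V : SU2) :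
    piMap (U : Matrix (Fin 2) (Fin 2) ℂ) = piMap (V : Matrix (Fin 2) (Fin 2) ℂ) ↔
      (U : Matrix (Fin 2) (Fin 2) ℂ) = (V : Matrix (Fin 2) (Fin 2) ℂ) ∨
      (U : Matrix (Fin 2) (Fin 2) ℂ) = -(V : Matrix (Fin 2) (Fin 2) ℂ) := by
  obtain ⟨U, hU⟩ := U
  obtain ⟨V, hV⟩ := V
  show piMap U = piMap V ↔ U = V ∨ U = -V
  have hUf := su2_form U hU
  have hVf := su2_form V hV
  have hdetU : U.det = 1 := (Matrix.mem_specialUnitaryGroup_iff.mp hU).2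
  have hdetV : V.det = 1 := (Matrix.mem_specialUnitaryGroup_iff.mp hV).2
  constructor
  · intro h
    rw [hUf] at hdetU
    rw [hVf] at hdetV
    rw [Matrix.det_fin_two_of] at hdetU hdetV
    have hn : (U 0 0).re^2 + (U 0 0).im^2 + (U 0 1).re^2 + (U 0 1).im^2 = 1 := by
      have := congrArg Complex.re hdetU
      simp [Complex.mul_re] at this
      linear_combination this
    have hn' : (V 0 0).re^2 + (V 0 0).im^2 + (V 0 1).re^2 + (V 0 1).im^2 = 1 := by
      have := congrArg Complex.re hdetV
      simp [Complex.mul_re] at this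
      linear_combination this
    rw [hUf, hVf, piMap_form, piMap_form] at h
    have H := fun i j => congrFun (congrFun h i) j
    have H00 := H 0 0
    have H01 := H 0 1
    have H02 := H 0 2
    have H10 := H 1 0
    have H11 := H 1 1
    have H12 := H 1 2
    have H20 := H 2 0
    have H21 := H 2 1
    have H22 := H 2 2
    simp only [Matrix.cons_val', Matrix.cons_val_zero, Matrix.cons_val_one, Matrix.head_cons,
      Matrix.empty_val', Matrix.cons_val_fin_one, Matrix.head_fin_const, Matrix.cons_val_two,
      Matrix.tail_cons, Matrix.of_apply] at H00 H01 H02 H10 H11 H12 H20 H21 H22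
    rcases key (U 0 0).re (U 0 0).im (U 0 1).re (U 0 1).im
        (V 0 0).re (V 0 0).im (V 0 1).re (V 0 1).im hn hn'
        (by linear_combination H00) (by linear_combination H01) (by linear_combination H02)
        (by linear_combination H10) (by linear_combination H11) (by linear_combination H12)
        (by linear_combination H20) (by linear_combination H21) (by linear_combination H22)
      with ⟨e1, e2, e3, e4⟩ | ⟨e1, e2, e3, e4⟩
    · left
      have ha : U 0 0 = V 0 0 := Complex.ext e1 e2
      have hb : U 0 1 = V 0 1 := Complex.ext e3 e4
      rw [hUf, hVf, ha, hb]
    · right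
      have ha : U 0 0 = -V 0 0 := Complex.ext (by simpa using e1) (by simpa using e2)
      have hb : U 0 1 = -V 0 1 := Complex.ext (by simpa using e3) (by simpa using e4)
      rw [hUf, hVf, ha, hb]
      ext i j
      fin_cases i <;> fin_cases j <;> simp
  · rintro (h | h) <;> rw [h]
    ext i j
    simp [piMap, Matrix.conjTranspose_neg, Matrix.mul_neg, Matrix.neg_mul, neg_neg]
end

section
/- For every 3×3 real matrix R with Rᵀ * R = 1 and Matrix.det R = 1, there exists U in SU(2) such that π(U) = R; that is, π is surjective onto SO(3). -/
/-!
A unit quaternion `q = a + b i + c j + d k` gives the matrix `a - I (b σ₁ + c σ₂ + d σ₃)` in SU(2),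
and `π` sends it to the Euler–Rodrigues rotation matrix of `q`. So it suffices to write every
`R ∈ SO(3)` as the rotation of a unit quaternion. If `R` is such a rotation then `4 q qᵀ` is a
matrix `K` linear in `R` with trace `4`; for an arbitrary `R ∈ SO(3)` the orthogonality and cofactor
relations still show that every column `v` of `K` has rotation matrix `4 Kₖₖ R` and squared norm
`4 Kₖₖ`, and normalizing a column with `Kₖₖ ≥ 1` produces `q`.
-/

open Matrix Complex

open scoped Quaternion

/-- `a + b i + c j + d k ↦ a - I (b σ₁ + c σ₂ + d σ₃)`. -/
noncomputable def quatMatrix (q : ℍ[ℝ]) : Matrix (Fin 2) (Fin 2) ℂ :=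
  !![(q.re : ℂ) - q.imK * I, -q.imJ - q.imI * I; (q.imJ : ℂ) - q.imI * I, (q.re : ℂ) + q.imK * I]

lemma quatMatrix_mul_star (q : ℍ[ℝ]) :
    quatMatrix q * star (quatMatrix q) = ((Quaternion.normSq q : ℝ) : ℂ) • 1 := by
  ext i j
  fin_cases i <;> fin_cases j <;>
    simp [quatMatrix, mul_apply, Fin.sum_univ_two, Complex.ext_iff, Quaternion.normSq_def', sq] <;>
    constructor <;> ring

lemma det_quatMatrix (q : ℍ[ℝ]) : (quatMatrix q).det = (Quaternion.normSq q : ℝ) := by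
  simp only [quatMatrix, det_fin_two_of, Quaternion.normSq_def']
  push_cast
  linear_combination (-(q.imI : ℂ) ^ 2 - (q.imK : ℂ) ^ 2) * I_sq

lemma quatMatrix_mem_SU2 {q : ℍ[ℝ]} (hq : Quaternion.normSq q = 1) : quatMatrix q ∈ SU2 :=
  mem_specialUnitaryGroup_iff.mpr ⟨mem_unitaryGroup_iff.mpr (by simp [quatMatrix_mul_star, hq]),
    by simp [det_quatMatrix, hq]⟩

def quatRot (q : ℍ[ℝ]) : Matrix (Fin 3) (Fin 3) ℝ :=
  !![q.re ^ 2 + q.imI ^ 2 - q.imJ ^ 2 - q.imK ^ 2, 2 * (q.imI * q.imJ - q.re * q.imK),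
      2 * (q.imI * q.imK + q.re * q.imJ);
    2 * (q.imI * q.imJ + q.re * q.imK), q.re ^ 2 - q.imI ^ 2 + q.imJ ^ 2 - q.imK ^ 2,
      2 * (q.imJ * q.imK - q.re * q.imI);
    2 * (q.imI * q.imK - q.re * q.imJ), 2 * (q.imJ * q.imK + q.re * q.imI),
      q.re ^ 2 - q.imI ^ 2 - q.imJ ^ 2 + q.imK ^ 2]

lemma piMap_quatMatrix (q : ℍ[ℝ]) : piMap (quatMatrix q) = quatRot q := by
  ext i j
  fin_cases i <;> fin_cases j <;>
    simp [piMap, sigma, quatMatrix, quatRot, trace_fin_two, mul_apply, Fin.sum_univ_two] <;> ring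

lemma quatRot_smul (c : ℝ) (q : ℍ[ℝ]) : quatRot (c • q) = c ^ 2 • quatRot q := by
  ext i j
  fin_cases i <;> fin_cases j <;> simp [quatRot] <;> ring

lemma adjugate_eq_transpose_of_orthogonal {n α : Type*} [Fintype n] [DecidableEq n] [CommRing α]
    {R : Matrix n n α} (horth : Rᵀ * R = 1) (hdet : R.det = 1) : R.adjugate = Rᵀ := by
  rw [← inv_eq_left_inv horth, Matrix.inv_def, hdet, Ring.inverse_one, one_smul]

/-- For `R = quatRot q` with `q` a unit quaternion this is `4 q qᵀ`, written linearly in `R`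
(Shepperd's method). -/
def quatOuter (R : Matrix (Fin 3) (Fin 3) ℝ) : Matrix (Fin 4) (Fin 4) ℝ :=
  !![1 + R 0 0 + R 1 1 + R 2 2, R 2 1 - R 1 2, R 0 2 - R 2 0, R 1 0 - R 0 1;
    R 2 1 - R 1 2, 1 + R 0 0 - R 1 1 - R 2 2, R 0 1 + R 1 0, R 0 2 + R 2 0;
    R 0 2 - R 2 0, R 0 1 + R 1 0, 1 - R 0 0 + R 1 1 - R 2 2, R 1 2 + R 2 1;
    R 1 0 - R 0 1, R 0 2 + R 2 0, R 1 2 + R 2 1, 1 - R 0 0 - R 1 1 + R 2 2]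

def quatOuterCol (R : Matrix (Fin 3) (Fin 3) ℝ) (k : Fin 4) : ℍ[ℝ] :=
  ⟨quatOuter R 0 k, quatOuter R 1 k, quatOuter R 2 k, quatOuter R 3 k⟩

lemma exists_one_le_quatOuter_diag (R : Matrix (Fin 3) (Fin 3) ℝ) : ∃ k, 1 ≤ quatOuter R k k := by
  have htrace : ∑ k, quatOuter R k k = ∑ _k : Fin 4, (1 : ℝ) := by
    simp only [quatOuter, Fin.isValue, of_apply, cons_val', cons_val_fin_one, Fin.sum_univ_four,
      cons_val_zero, cons_val_one, cons_val, Finset.sum_const, Finset.card_univ, Fintype.card_fin,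
      nsmul_eq_mul]
    ring
  obtain ⟨k, -, hk⟩ := Finset.exists_le_of_sum_le Finset.univ_nonempty htrace.ge
  exact ⟨k, hk⟩

lemma quatRot_quatOuterCol_and_normSq {R : Matrix (Fin 3) (Fin 3) ℝ} (horth : Rᵀ * R = 1)
    (hdet : R.det = 1) (k : Fin 4) :
    quatRot (quatOuterCol R k) = (4 * quatOuter R k k) • R ∧
      Quaternion.normSq (quatOuterCol R k) = 4 * quatOuter R k k := by
  have hcol (i j : Fin 3) := congrFun₂ horth i j
  have hrow (i j : Fin 3) := congrFun₂ (mul_eq_one_comm.mp horth : R * Rᵀ = 1) i j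
  have hcof (i j : Fin 3) := congrFun₂ (adjugate_eq_transpose_of_orthogonal horth hdet) i j
  simp only [mul_apply, Fin.sum_univ_three, transpose_apply, one_apply, adjugate_fin_three,
    Fin.forall_fin_succ, Fin.succ_zero_eq_one, Fin.succ_one_eq_two, IsEmpty.forall_iff, and_true,
    Fin.isValue, ↓reduceIte, Fin.reduceEq, of_apply, cons_val', cons_val_zero, cons_val_fin_one,
    cons_val_one, cons_val] at hcol hrow hcof
  obtain ⟨⟨c00, c01, c02⟩, ⟨c10, c11, c12⟩, ⟨c20, c21, c22⟩⟩ := hcol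
  obtain ⟨⟨r00, r01, r02⟩, ⟨r10, r11, r12⟩, ⟨r20, r21, r22⟩⟩ := hrow
  obtain ⟨⟨a00, a01, a02⟩, ⟨a10, a11, a12⟩, ⟨a20, a21, a22⟩⟩ := hcof
  -- Thanks to the cofactor relations, each entry is a combination with constant coefficients
  -- of the relations above (monomials in the entries of `R` as atoms), so `linarith` suffices.
  refine ⟨?_, ?_⟩
  · ext i j
    fin_cases k <;> fin_cases i <;> fin_cases j <;>
      simp only [quatRot, quatOuterCol, quatOuter, Fin.isValue, Fin.zero_eta, Fin.mk_one,
        Fin.reduceFinMk, of_apply, cons_val', cons_val_zero, cons_val_fin_one, cons_val_one, cons_val,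
        Matrix.smul_apply, smul_eq_mul] <;>
      linarith
  · rw [Quaternion.normSq_def']
    fin_cases k <;> simp [quatOuterCol, quatOuter] <;> linarith

lemma exists_quatRot_eq {R : Matrix (Fin 3) (Fin 3) ℝ} (horth : Rᵀ * R = 1) (hdet : R.det = 1) :
    ∃ q : ℍ[ℝ], Quaternion.normSq q = 1 ∧ quatRot q = R := by
  obtain ⟨k, hk⟩ := exists_one_le_quatOuter_diag R
  obtain ⟨hrot, hnorm⟩ := quatRot_quatOuterCol_and_normSq horth hdet k
  have hscale : (2 * √(quatOuter R k k))⁻¹ ^ 2 * (4 * quatOuter R k k) = 1 := by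
    rw [inv_pow, mul_pow, Real.sq_sqrt (by linarith)]
    field_simp
    norm_num
  refine ⟨(2 * √(quatOuter R k k))⁻¹ • quatOuterCol R k, ?_, ?_⟩
  · rw [Quaternion.normSq_smul, hnorm, hscale]
  · rw [quatRot_smul, hrot, smul_smul, hscale, one_smul]

theorem stmt14 (R : Matrix (Fin 3) (Fin 3) ℝ) (horth : Rᵀ * R = 1)
    (hdet : Matrix.det R = 1) :
    ∃ U : SU2, piMap (U : Matrix (Fin 2) (Fin 2) ℂ) = R := by
  obtain ⟨q, hq, hrot⟩ := exists_quatRot_eq horth hdet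
  exact ⟨⟨quatMatrix q, quatMatrix_mem_SU2 hq⟩, (piMap_quatMatrix q).trans hrot⟩
end
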